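/- Let ρ be an n×n density matrix with diagonal entries d_i and define C_{l₁}(ρ) = Σ_{i≠j}|ρ_{ij}| and C_{l₂}(ρ) = Σ_{i≠j}|ρ_{ij}|². For fixed d and C > 0, let f(C, d) = √(2C)·Σ_k √v̂_k, where v̂ is the greedy filling of the descending rearrangement u of the vector (2 d_i d_j / C)_{i<j} (v̂_k = u_k up to the largest M with Σ_{l≤M} u_l ≤ 1, then v̂_{M+1} = 1 − Σ_{l≤M} u_l, then zeros). Then C_{l₁}(ρ) ≥ f(C_{l₂}(ρ), d), and f(·, d) is nondecreasing in its first argument; consequently, if p is the outcome distribution of a von Neumann measurement on ρ, then C_{l₁}(ρ) ≥ f(S_L(d) − S_L(d∨p), d). -/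

import Mathlib

open Matrix Finset ComplexOrder

/-- The vector `x` sorted in descending order. -/
noncomputable def sortDesc {n : ℕ} (x : Fin n → ℝ) : Fin n → ℝ :=
  fun i => x (Tuple.sort x i.rev)

/-- The sum of the `k` largest entries of `x`. -/
noncomputable def topSum {n : ℕ} (x : Fin n → ℝ) (k : ℕ) : ℝ :=
  ∑ i ∈ Finset.univ.filter (fun i : Fin n => (i : ℕ) < k), sortDesc x i

/-- `Maj b a` means `b ≺ a`, i.e. `a` majorizes `b`. -/
def Maj {n : ℕ} (b a : Fin n → ℝ) : Prop := ∀ k : ℕ, topSum b k ≤ topSum a k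

/-- `p` is a probability vector. -/
def IsProbVec {n : ℕ} (p : Fin n → ℝ) : Prop := (∀ i, 0 ≤ p i) ∧ ∑ i, p i = 1

/-- Shannon entropy (base 2). -/
noncomputable def shannon {ι : Type*} [Fintype ι] (p : ι → ℝ) : ℝ :=
  -∑ i, p i * Real.logb 2 (p i)

/-- A von Neumann measurement: an orthonormal basis of `ℂⁿ`. -/
def IsONB {n : ℕ} (ψ : Fin n → (Fin n → ℂ)) : Prop :=
  ∀ i j, star (ψ i) ⬝ᵥ ψ j = if i = j then 1 else 0

/-- Outcome distribution of the measurement `ψ` on the state `ρ`. -/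
noncomputable def outcome {n : ℕ} (ρ : Matrix (Fin n) (Fin n) ℂ)
    (ψ : Fin n → (Fin n → ℂ)) : Fin n → ℝ :=
  fun i => (star (ψ i) ⬝ᵥ (ρ *ᵥ ψ i)).re

/-- Vector of diagonal entries of `ρ` (real parts). -/
noncomputable def diagVec {n : ℕ} (ρ : Matrix (Fin n) (Fin n) ℂ) : Fin n → ℝ :=
  fun i => (ρ i i).re

/-- `c` is the majorization join of `a` and `b`. -/
def IsMajJoin {n : ℕ} (a b c : Fin n → ℝ) : Prop :=
  IsProbVec c ∧ Maj a c ∧ Maj b c ∧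
    ∀ c', IsProbVec c' → Maj a c' → Maj b c' → Maj c c'

/-- `c` is the majorization meet of the set `X`. -/
def IsMajMeet {n : ℕ} (X : Set (Fin n → ℝ)) (c : Fin n → ℝ) : Prop :=
  IsProbVec c ∧ (∀ p ∈ X, Maj c p) ∧
    ∀ c', IsProbVec c' → (∀ p ∈ X, Maj c' p) → Maj c' c


/-- The `l₂` norm of coherence `C_{l₂}(ρ) = ∑_{i≠j} |ρ_{ij}|²`. -/
noncomputable def Cl2 {n : ℕ} (ρ : Matrix (Fin n) (Fin n) ℂ) : ℝ :=
  ∑ i, ∑ j, if i ≠ j then ‖ρ i j‖ ^ 2 else 0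

/-- The linear (Tsallis-2) entropy `S_L(p) = 1 - ∑ᵢ pᵢ²`. -/
def linEnt {ι : Type*} [Fintype ι] (p : ι → ℝ) : ℝ := 1 - ∑ i, (p i) ^ 2

/-- The `l₁` norm of coherence `C_{l₁}(ρ) = ∑_{i≠j} |ρ_{ij}|`. -/
noncomputable def Cl1 {n : ℕ} (ρ : Matrix (Fin n) (Fin n) ℂ) : ℝ :=
  ∑ i, ∑ j, if i ≠ j then ‖ρ i j‖ else 0

/-- Descending sort of a vector indexed by an arbitrary fintype. -/
noncomputable def sortDescF {ι : Type*} [Fintype ι] (x : ι → ℝ) :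
    Fin (Fintype.card ι) → ℝ :=
  sortDesc (x ∘ (Fintype.equivFin ι).symm)

/-- Greedy filling of the (descending) cap vector `u` with total mass 1:
`v̂_k = u_k` up to the largest `M` with `∑_{l ≤ M} u_l ≤ 1`, then the leftover
`1 - ∑_{l ≤ M} u_l`, then zeros. -/
noncomputable def greedyFill {m : ℕ} (u : Fin m → ℝ) : Fin m → ℝ :=
  fun k => min (u k)
    (max 0 (1 - ∑ l ∈ Finset.univ.filter (fun l : Fin m => (l : ℕ) < (k : ℕ)), u l))

/-- The function `f(C, d) = √(2C) · ∑ₖ √v̂ₖ`, where `v̂` is the greedy filling of the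
descending rearrangement of the vector `(2 dᵢ dⱼ / C)_{i<j}` (indexed by the
two-element subsets of `Fin n`). -/
noncomputable def fEst (n : ℕ) (C : ℝ) (d : Fin n → ℝ) : ℝ :=
  Real.sqrt (2 * C) *
    ∑ k, Real.sqrt (greedyFill (sortDescF
      (fun s : {s : Finset (Fin n) // s.card = 2} => 2 * (∏ i ∈ s.1, d i) / C)) k)

section Toolkit

variable {n : ℕ}

lemma sortDesc_antitone (x : Fin n → ℝ) : Antitone (sortDesc x) := by
  intro i j hij
  exact Tuple.monotone_sort x (Fin.rev_le_rev.mpr hij)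

/-- `sortDesc x = x ∘ e` for the permutation `e`. -/
lemma sortDesc_eq_comp (x : Fin n → ℝ) :
    sortDesc x = x ∘ (Fin.revPerm.trans (Tuple.sort x)) := rfl

lemma sum_comp_sortDesc (g : ℝ → ℝ) (x : Fin n → ℝ) :
    ∑ i, g (sortDesc x i) = ∑ i, g (x i) := by
  rw [sortDesc_eq_comp]
  exact Equiv.sum_comp (Fin.revPerm.trans (Tuple.sort x)) (fun j => g (x j))

lemma sum_sortDesc (x : Fin n → ℝ) : ∑ i, sortDesc x i = ∑ i, x i := by
  simpa using sum_comp_sortDesc id x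

lemma sortDesc_nonneg {x : Fin n → ℝ} (hx : ∀ i, 0 ≤ x i) (i : Fin n) :
    0 ≤ sortDesc x i := hx _

/-- For an antitone `α`, the sum over any finset `T` is at most the sum of the
first `T.card` entries. -/
lemma antitone_sum_le {α : Fin n → ℝ} (hα : Antitone α) (T : Finset (Fin n)) :
    ∑ j ∈ T, α j ≤ ∑ j ∈ univ.filter (fun j : Fin n => (j : ℕ) < T.card), α j := by
  classical
  have hcn : T.card ≤ n := by simpa using T.card_le_univ
  have key : ∀ k (h : k < T.card), k ≤ ((T.orderEmbOfFin rfl ⟨k, h⟩ : Fin n) : ℕ) := by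
    intro k
    induction k with
    | zero => intro h; exact Nat.zero_le _
    | succ k ih =>
      intro h
      have hk : k < T.card := Nat.lt_of_succ_lt h
      have h1 := ih hk
      have h2 : (T.orderEmbOfFin rfl ⟨k, hk⟩ : Fin n) < T.orderEmbOfFin rfl ⟨k+1, h⟩ := by
        apply (T.orderEmbOfFin rfl).strictMono
        exact Fin.mk_lt_mk.mpr (Nat.lt_succ_self k)
      have h2' : ((T.orderEmbOfFin rfl ⟨k, hk⟩ : Fin n) : ℕ) < ((T.orderEmbOfFin rfl ⟨k+1, h⟩ : Fin n) : ℕ) := h2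
      omega
  have hL : ∑ j ∈ T, α j = ∑ i : Fin T.card, α (T.orderEmbOfFin rfl i) := by
    rw [← Finset.sum_coe_sort T α,
      ← Equiv.sum_comp (T.orderIsoOfFin rfl).toEquiv (fun j : T => α (j : Fin n))]
    rfl
  have hset : univ.filter (fun j : Fin n => (j : ℕ) < T.card)
      = (univ : Finset (Fin T.card)).image (Fin.castLE hcn) := by
    ext j
    simp only [mem_filter, mem_univ, true_and, mem_image]
    constructor
    · intro hj; exact ⟨⟨(j : ℕ), hj⟩, by simp [Fin.ext_iff]⟩
    · rintro ⟨i, rfl⟩; exact i.2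
  have hR : ∑ j ∈ univ.filter (fun j : Fin n => (j : ℕ) < T.card), α j
      = ∑ i : Fin T.card, α (Fin.castLE hcn i) := by
    rw [hset, Finset.sum_image (by intro a _ b _ hab; exact Fin.castLE_injective hcn hab)]
  rw [hL, hR]
  apply Finset.sum_le_sum
  intro i _
  exact hα (by simpa [Fin.le_def] using key (i : ℕ) i.2)

end Toolkit

lemma filter_lt_val_eq_min (k : ℕ) :
    (univ.filter (fun i : Fin n => (i : ℕ) < k)) =
    (univ.filter (fun i : Fin n => (i : ℕ) < min k n)) := by
  ext i; simp only [mem_filter, mem_univ, true_and]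
  have := i.2; omega

lemma card_filter_lt_val (k : ℕ) :
    (univ.filter (fun i : Fin n => (i : ℕ) < k)).card = min k n := by
  have h : ((univ.filter (fun i : Fin n => (i : ℕ) < k)).image Fin.val) = Finset.range (min k n) := by
    ext a
    simp only [mem_image, mem_filter, mem_univ, true_and, mem_range]
    constructor
    · rintro ⟨i, hi, rfl⟩; have := i.2; omega
    · intro ha; exact ⟨⟨a, by omega⟩, by show a < k; omega, rfl⟩
  rw [← Finset.card_range (min k n), ← h,
    Finset.card_image_of_injective _ Fin.val_injective]

lemma topSum_eq_sum_image (x : Fin n → ℝ) (k : ℕ) :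
    topSum x k = ∑ i ∈ (univ.filter (fun i : Fin n => (i : ℕ) < k)).image
      (fun i => (Fin.revPerm.trans (Tuple.sort x)) i), x i := by
  rw [Finset.sum_image
    (fun a _ b _ h => (Fin.revPerm.trans (Tuple.sort x)).injective h)]
  rfl

lemma sum_le_topSum {x : Fin n → ℝ} (hx : ∀ i, 0 ≤ x i) {S : Finset (Fin n)} {k : ℕ}
    (hS : S.card ≤ k) : ∑ i ∈ S, x i ≤ topSum x k := by
  classical
  set e := Fin.revPerm.trans (Tuple.sort x) with he
  have hxe : ∀ j, x j = sortDesc x (e.symm j) := by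
    intro j
    show x j = x (e (e.symm j))
    rw [e.apply_symm_apply]
  calc ∑ i ∈ S, x i = ∑ j ∈ S.image e.symm, sortDesc x j := by
        rw [Finset.sum_image (fun a _ b _ h => e.symm.injective h)]
        exact Finset.sum_congr rfl (fun i _ => hxe i)
    _ ≤ ∑ j ∈ univ.filter (fun j : Fin n => (j : ℕ) < (S.image e.symm).card), sortDesc x j :=
        antitone_sum_le (sortDesc_antitone x) _
    _ ≤ topSum x k := by
        apply Finset.sum_le_sum_of_subset_of_nonneg
        · apply Finset.monotone_filter_right
          intro i hi
          have : (S.image e.symm).card ≤ k :=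
            le_trans Finset.card_image_le hS
          omega
        · intro i _ _; exact sortDesc_nonneg hx i

lemma topSum_of_antitone {x : Fin n → ℝ} (hx : Antitone x) (hx0 : ∀ i, 0 ≤ x i) (k : ℕ) :
    topSum x k = ∑ i ∈ univ.filter (fun i : Fin n => (i : ℕ) < k), x i := by
  apply le_antisymm
  · rw [topSum_eq_sum_image]
    refine le_trans (antitone_sum_le hx _) ?_
    apply Finset.sum_le_sum_of_subset_of_nonneg
    · apply Finset.monotone_filter_right
      intro i hi
      have h1 : ((univ.filter (fun i : Fin n => (i : ℕ) < k)).image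
          (fun i => (Fin.revPerm.trans (Tuple.sort x)) i)).card ≤ min k n := by
        refine le_trans Finset.card_image_le ?_
        rw [card_filter_lt_val]
      omega
    · intro i _ _; exact hx0 i
  · exact sum_le_topSum hx0 (by rw [card_filter_lt_val]; omega)

lemma topSum_total (x : Fin n → ℝ) {k : ℕ} (hk : n ≤ k) : topSum x k = ∑ i, x i := by
  unfold topSum
  have : (univ.filter (fun i : Fin n => (i : ℕ) < k)) = univ := by
    ext i; simpa using lt_of_lt_of_le i.2 hk
  rw [this]
  exact sum_comp_sortDesc id x

/-- Padding of the sorted vector by zeros. -/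
noncomputable def padded {m : ℕ} (x : Fin m → ℝ) : ℕ → ℝ :=
  fun i => if h : i < m then sortDesc x ⟨i, h⟩ else 0

lemma topSum_eq_range {m : ℕ} (x : Fin m → ℝ) {k : ℕ} (hk : k ≤ m) :
    topSum x k = ∑ i ∈ Finset.range k, padded x i := by
  unfold topSum
  rw [Finset.sum_filter]
  have h1 : ∀ i : Fin m, (if (i : ℕ) < k then sortDesc x i else 0)
      = (fun j : ℕ => if j < k then padded x j else 0) (i : ℕ) := by
    intro i
    simp only [padded, i.2, dif_pos, Fin.eta]
  rw [Finset.sum_congr rfl (fun i _ => h1 i),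
    Fin.sum_univ_eq_sum_range (fun j => if j < k then padded x j else 0) m,
    ← Finset.sum_filter]
  congr 1
  ext a
  simp only [mem_filter, mem_range]
  omega

lemma padded_coe {m : ℕ} (x : Fin m → ℝ) (i : Fin m) : padded x (i : ℕ) = sortDesc x i := by
  simp [padded, i.2, Fin.eta]

lemma sum_range_g_padded {m : ℕ} (g : ℝ → ℝ) (x : Fin m → ℝ) :
    ∑ i ∈ Finset.range m, g (padded x i) = ∑ i, g (x i) := by
  rw [← Fin.sum_univ_eq_sum_range (fun j => g (padded x j)) m]
  rw [Finset.sum_congr rfl (fun i _ => by rw [padded_coe])]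
  exact sum_comp_sortDesc g x

lemma padded_nonneg {m : ℕ} {x : Fin m → ℝ} (hx : ∀ i, 0 ≤ x i) (i : ℕ) :
    0 ≤ padded x i := by
  unfold padded; split
  · exact sortDesc_nonneg hx _
  · exact le_refl 0

lemma padded_antitone_lt {m : ℕ} (x : Fin m → ℝ) {i j : ℕ} (hij : i ≤ j) (hj : j < m) :
    padded x j ≤ padded x i := by
  have hi : i < m := lt_of_le_of_lt hij hj
  simp only [padded, dif_pos hi, dif_pos hj]
  exact sortDesc_antitone x (by exact hij)

lemma padded_antitone {m : ℕ} {x : Fin m → ℝ} (hx : ∀ i, 0 ≤ x i) : Antitone (padded x) := by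
  intro i j hij
  by_cases hj : j < m
  · exact padded_antitone_lt x hij hj
  · simp only [padded, dif_neg hj]
    exact padded_nonneg hx i

lemma abel_bound (s δ : ℕ → ℝ) :
    ∀ M : ℕ, (∀ i j, i ≤ j → j ≤ M → s i ≤ s j) →
      (∀ k, k ≤ M → ∑ i ∈ Finset.range k, δ i ≤ 0) →
      s M * (∑ i ∈ Finset.range M, δ i) ≤ ∑ i ∈ Finset.range M, s i * δ i := by
  intro M
  induction M with
  | zero => simp
  | succ M ih =>
    intro hs hΔ
    have h1 := ih (fun i j hij hj => hs i j hij (Nat.le_succ_of_le hj))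
      (fun k hk => hΔ k (Nat.le_succ_of_le hk))
    rw [Finset.sum_range_succ, Finset.sum_range_succ]
    have h2 : s (M+1) * (∑ i ∈ Finset.range M, δ i + δ M)
        ≤ s M * (∑ i ∈ Finset.range M, δ i + δ M) :=
      mul_le_mul_of_nonpos_right (hs M (M+1) (Nat.le_succ M) le_rfl)
        (by simpa [Finset.sum_range_succ] using hΔ (M+1) le_rfl)
    calc s (M+1) * (∑ i ∈ Finset.range M, δ i + δ M)
        ≤ s M * (∑ i ∈ Finset.range M, δ i + δ M) := h2
      _ = s M * (∑ i ∈ Finset.range M, δ i) + s M * δ M := mul_add _ _ _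
      _ ≤ (∑ i ∈ Finset.range M, s i * δ i) + s M * δ M := by linarith [h1]

lemma maj_sum_sq_le {m : ℕ} {c l : Fin m → ℝ} (h : Maj c l) (hsum : ∑ i, c i = ∑ i, l i) :
    ∑ i, (c i) ^ 2 ≤ ∑ i, (l i) ^ 2 := by
  set β := padded c with hβdef
  set α := padded l with hαdef
  have hpart : ∀ k, k ≤ m → ∑ i ∈ Finset.range k, (β i - α i) ≤ 0 := by
    intro k hk
    rw [Finset.sum_sub_distrib, ← topSum_eq_range c hk, ← topSum_eq_range l hk]
    exact sub_nonpos.mpr (h k)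
  have htot : ∑ i ∈ Finset.range m, (β i - α i) = 0 := by
    have h1 := sum_range_g_padded id c
    have h2 := sum_range_g_padded id l
    simp only [id] at h1 h2
    rw [Finset.sum_sub_distrib, hβdef, hαdef, h1, h2]
    simpa using sub_eq_zero.mpr hsum
  rcases Nat.eq_zero_or_pos m with hm | hm
  · subst hm; simp
  set s : ℕ → ℝ := fun i => -2 * β (min i (m-1)) with hsdef
  have hsmono : ∀ i j : ℕ, i ≤ j → j ≤ m → s i ≤ s j := by
    intro i j hij _
    have : β (min j (m-1)) ≤ β (min i (m-1)) :=
      padded_antitone_lt c (by omega) (by omega)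
    simp only [hsdef]; nlinarith
  have habel := abel_bound s (fun i => β i - α i) m hsmono hpart
  rw [htot, mul_zero] at habel
  have hper : ∀ i ∈ Finset.range m, s i * (β i - α i) ≤ (α i)^2 - (β i)^2 := by
    intro i hi
    rw [Finset.mem_range] at hi
    have : min i (m-1) = i := by omega
    simp only [hsdef, this]
    nlinarith [sq_nonneg (α i - β i)]
  have := Finset.sum_le_sum hper
  have h2 : (0:ℝ) ≤ ∑ i ∈ Finset.range m, ((α i)^2 - (β i)^2) := le_trans habel this
  have g1 := sum_range_g_padded (fun x => x^2) c
  have g2 := sum_range_g_padded (fun x => x^2) l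
  rw [Finset.sum_sub_distrib, hβdef, hαdef, g1, g2] at h2
  linarith

lemma sqrt_concave_bound {a b : ℝ} (ha : 0 ≤ a) (hb : 0 < b) :
    (b - a) * (1 / (2 * Real.sqrt b)) ≤ Real.sqrt b - Real.sqrt a := by
  rw [mul_one_div, div_le_iff₀ (by positivity)]
  nlinarith [Real.sq_sqrt ha, Real.sq_sqrt hb.le, Real.sqrt_nonneg a, Real.sqrt_nonneg b,
    sq_nonneg (Real.sqrt b - Real.sqrt a), Real.sqrt_pos.mpr hb]

lemma maj_sum_sqrt_le {m : ℕ} {t v : Fin m → ℝ} (ht : ∀ i, 0 ≤ t i) (hv : ∀ i, 0 ≤ v i)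
    (h : Maj t v) (hsum : ∑ i, t i = ∑ i, v i) :
    ∑ i, Real.sqrt (v i) ≤ ∑ i, Real.sqrt (t i) := by
  classical
  set β := padded t with hβdef
  set α := padded v with hαdef
  have hβ0 : ∀ i, 0 ≤ β i := padded_nonneg ht
  have hα0 : ∀ i, 0 ≤ α i := padded_nonneg hv
  have hβanti : Antitone β := padded_antitone ht
  have hMex : β m = 0 := dif_neg (lt_irrefl m)
  have hEx : ∃ i, β i = 0 := ⟨m, hMex⟩
  set M := Nat.find hEx with hMdef
  have hMle : M ≤ m := Nat.find_le hMex
  have hβpos : ∀ i, i < M → 0 < β i := fun i hi =>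
    lt_of_le_of_ne (hβ0 i) (Ne.symm (Nat.find_min hEx hi))
  have hβzero : ∀ i, M ≤ i → β i = 0 := fun i hi =>
    le_antisymm (le_trans (hβanti hi) (le_of_eq (Nat.find_spec hEx))) (hβ0 i)
  -- partial sums
  have hpart : ∀ k, k ≤ m → ∑ i ∈ Finset.range k, (β i - α i) ≤ 0 := by
    intro k hk
    rw [Finset.sum_sub_distrib, hβdef, hαdef, ← topSum_eq_range t hk, ← topSum_eq_range v hk]
    exact sub_nonpos.mpr (h k)
  have htotβ : ∑ i ∈ Finset.range m, β i = ∑ i ∈ Finset.range m, α i := by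
    have h1 := sum_range_g_padded id t
    have h2 := sum_range_g_padded id v
    simp only [id] at h1 h2
    rw [hβdef, hαdef, h1, h2]; exact hsum
  have hβtrunc : ∑ i ∈ Finset.range m, β i = ∑ i ∈ Finset.range M, β i :=
    (Finset.sum_subset (Finset.range_subset_range.mpr hMle)
      (fun i _ hi => hβzero i (by simpa using hi))).symm
  -- the tail of α is zero too
  have hαM : ∑ i ∈ Finset.range M, α i = ∑ i ∈ Finset.range m, α i := by
    have h1 : ∑ i ∈ Finset.range M, β i ≤ ∑ i ∈ Finset.range M, α i := by
      have := hpart M hMle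
      rw [Finset.sum_sub_distrib] at this; linarith
    have h2 : ∑ i ∈ Finset.range M, α i ≤ ∑ i ∈ Finset.range m, α i :=
      Finset.sum_le_sum_of_subset_of_nonneg (Finset.range_subset_range.mpr hMle)
        (fun i _ _ => hα0 i)
    have h3 : ∑ i ∈ Finset.range m, α i = ∑ i ∈ Finset.range M, β i := by
      rw [← htotβ, hβtrunc]
    linarith
  have hαzero : ∀ i, M ≤ i → α i = 0 := by
    intro i hi
    by_cases him : i < m
    · have hsd : ∑ j ∈ Finset.range m \ Finset.range M, α j = 0 := by
        rw [Finset.sum_sdiff_eq_sub (Finset.range_subset_range.mpr hMle)]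
        linarith [hαM]
      have := (Finset.sum_eq_zero_iff_of_nonneg
        (fun j _ => hα0 j)).mp hsd i (by simp [Finset.mem_sdiff]; omega)
      exact this
    · exact dif_neg him
  have hΔM : ∑ i ∈ Finset.range M, (β i - α i) = 0 := by
    rw [Finset.sum_sub_distrib, ← hβtrunc, htotβ, hαM]
    ring
  -- reduce goal to range M
  have hgoalα : ∑ i, Real.sqrt (v i) = ∑ i ∈ Finset.range M, Real.sqrt (α i) := by
    rw [← sum_range_g_padded Real.sqrt v, ← hαdef]
    exact (Finset.sum_subset (Finset.range_subset_range.mpr hMle)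
      (fun i _ hi => by rw [hαzero i (by simpa using hi), Real.sqrt_zero])).symm
  have hgoalβ : ∑ i, Real.sqrt (t i) = ∑ i ∈ Finset.range M, Real.sqrt (β i) := by
    rw [← sum_range_g_padded Real.sqrt t, ← hβdef]
    exact (Finset.sum_subset (Finset.range_subset_range.mpr hMle)
      (fun i _ hi => by rw [hβzero i (by simpa using hi), Real.sqrt_zero])).symm
  rw [hgoalα, hgoalβ]
  rcases Nat.eq_zero_or_pos M with hM0 | hM0
  · simp [hM0]
  set s : ℕ → ℝ := fun i => 1 / (2 * Real.sqrt (β (min i (M-1)))) with hsdef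
  have hsmono : ∀ i j : ℕ, i ≤ j → j ≤ M → s i ≤ s j := by
    intro i j hij _
    have hji : β (min j (M-1)) ≤ β (min i (M-1)) := hβanti (by omega)
    have hpos : 0 < β (min j (M-1)) := hβpos _ (by omega)
    simp only [hsdef]
    apply one_div_le_one_div_of_le
    · positivity
    · have := Real.sqrt_le_sqrt hji
      nlinarith [Real.sqrt_nonneg (β (min j (M-1)))]
  have habel := abel_bound s (fun i => β i - α i) M hsmono
    (fun k hk => hpart k (le_trans hk hMle))
  rw [hΔM, mul_zero] at habel
  have hper : ∀ i ∈ Finset.range M, s i * (β i - α i)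
      ≤ Real.sqrt (β i) - Real.sqrt (α i) := by
    intro i hi
    rw [Finset.mem_range] at hi
    have hmin : min i (M-1) = i := by omega
    simp only [hsdef, hmin, mul_comm]
    exact sqrt_concave_bound (hα0 i) (hβpos i hi)
  have hfin : (0:ℝ) ≤ ∑ i ∈ Finset.range M, (Real.sqrt (β i) - Real.sqrt (α i)) :=
    le_trans habel (Finset.sum_le_sum hper)
  rw [Finset.sum_sub_distrib] at hfin
  linarith


section DS
variable {m : ℕ}

lemma sum_mul_le_topSum {l : Fin m → ℝ} (hl : ∀ j, 0 ≤ l j) (r : Fin m → ℝ)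
    (hr0 : ∀ j, 0 ≤ r j) (hr1 : ∀ j, r j ≤ 1) {k : ℕ}
    (hrs : ∑ j, r j = ((min k m : ℕ) : ℝ)) :
    ∑ j, r j * l j ≤ topSum l k := by
  classical
  set e := Fin.revPerm.trans (Tuple.sort l) with he
  have hcomp : ∑ j, r j * l j = ∑ j, (r (e j)) * sortDesc l j :=
    (Equiv.sum_comp e (fun j => r j * l j)).symm
  set r' := fun j => r (e j) with hr'
  set α := sortDesc l with hα
  have hαanti : Antitone α := sortDesc_antitone l
  have hα0 : ∀ j, 0 ≤ α j := sortDesc_nonneg hl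
  have hr'sum : ∑ j, r' j = ((min k m : ℕ) : ℝ) := by
    rw [hr', Equiv.sum_comp e r]; exact hrs
  have htop : topSum l k = ∑ j ∈ univ.filter (fun j : Fin m => (j : ℕ) < min k m), α j := by
    unfold topSum; rw [filter_lt_val_eq_min]
  rw [hcomp, htop]
  rcases Nat.eq_zero_or_pos (min k m) with h0 | h0
  · have hz : ∀ j, r' j = 0 := by
      intro j
      have h1 : ∑ j, r' j = 0 := by rw [hr'sum, h0]; simp
      exact (Finset.sum_eq_zero_iff_of_nonneg (fun j _ => hr0 (e j))).mp h1 j (mem_univ j)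
    rw [h0]
    refine le_trans (le_of_eq ?_) (Finset.sum_nonneg (fun j _ => hα0 j))
    exact Finset.sum_eq_zero (fun j _ => by rw [show r (e j) = 0 from hz j, zero_mul])
  · set k' := min k m with hk'
    have hk'm : k' ≤ m := min_le_right _ _
    have hk1 : k' - 1 < m := by omega
    set cst := α ⟨k'-1, hk1⟩ with hcst
    set χ : Fin m → ℝ := fun j => if (j : ℕ) < k' then 1 else 0 with hχ
    have hχsum : ∑ j, χ j = ((k' : ℕ) : ℝ) := by
      rw [hχ]
      rw [show (∑ j : Fin m, if (j : ℕ) < k' then (1:ℝ) else 0)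
          = ∑ j ∈ univ.filter (fun j : Fin m => (j : ℕ) < k'), (1:ℝ) from
        (Finset.sum_filter _ _).symm]
      rw [Finset.sum_const, card_filter_lt_val]
      simp [hk']
    have hχα : ∑ j, χ j * α j
        = ∑ j ∈ univ.filter (fun j : Fin m => (j : ℕ) < k'), α j := by
      rw [hχ]
      rw [show (∑ j : Fin m, (if (j : ℕ) < k' then (1:ℝ) else 0) * α j)
          = ∑ j : Fin m, (if (j : ℕ) < k' then α j else 0) from
        Finset.sum_congr rfl (fun j _ => by split <;> simp)]
      exact (Finset.sum_filter _ _).symm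
    have key : ∑ j, (r' j - χ j) * (α j - cst) ≤ 0 := by
      apply Finset.sum_nonpos
      intro j _
      by_cases hj : (j : ℕ) < k'
      · have hχj : χ j = 1 := if_pos hj
        have h1 : r' j - χ j ≤ 0 := by rw [hχj]; linarith [hr1 (e j)]
        have h2 : 0 ≤ α j - cst := by
          have : α j ≥ α ⟨k'-1, hk1⟩ := hαanti (by simp [Fin.le_def]; omega)
          simp only [hcst]; linarith
        exact mul_nonpos_iff.mpr (Or.inr ⟨h1, h2⟩)
      · have hχj : χ j = 0 := if_neg hj
        have h1 : 0 ≤ r' j - χ j := by rw [hχj]; simpa using hr0 (e j)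
        have h2 : α j - cst ≤ 0 := by
          have : α j ≤ α ⟨k'-1, hk1⟩ := hαanti (by simp [Fin.le_def]; omega)
          simp only [hcst]; linarith
        exact mul_nonpos_iff.mpr (Or.inl ⟨h1, h2⟩)
    have expand : ∑ j, (r' j - χ j) * (α j - cst)
        = (∑ j, r' j * α j) - (∑ j, χ j * α j)
          - cst * ((∑ j, r' j) - (∑ j, χ j)) := by
      rw [mul_sub, ← Finset.sum_sub_distrib, Finset.mul_sum, Finset.mul_sum,
        ← Finset.sum_sub_distrib, ← Finset.sum_sub_distrib]
      exact Finset.sum_congr rfl (fun j _ => by ring)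
    rw [expand, hr'sum, hχsum, sub_self, mul_zero, sub_zero] at key
    rw [← hχα]
    linarith

lemma maj_of_doublyStochastic {q l : Fin m → ℝ} {B : Fin m → Fin m → ℝ}
    (hB0 : ∀ i j, 0 ≤ B i j) (hrow : ∀ i, ∑ j, B i j = 1) (hcol : ∀ j, ∑ i, B i j = 1)
    (hl : ∀ j, 0 ≤ l j) (hq : ∀ i, q i = ∑ j, B i j * l j) : Maj q l := by
  intro k
  rw [topSum_eq_sum_image q k]
  set S := (univ.filter (fun i : Fin m => (i : ℕ) < k)).image
      (fun i => (Fin.revPerm.trans (Tuple.sort q)) i) with hS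
  have hcard : S.card = min k m := by
    rw [hS, Finset.card_image_of_injective _ (Fin.revPerm.trans (Tuple.sort q)).injective,
      card_filter_lt_val]
  set r : Fin m → ℝ := fun j => ∑ i ∈ S, B i j with hr
  have h1 : ∑ i ∈ S, q i = ∑ j, r j * l j := by
    rw [Finset.sum_congr rfl (fun i (_ : i ∈ S) => hq i), Finset.sum_comm]
    exact Finset.sum_congr rfl (fun j _ => by rw [hr, Finset.sum_mul])
  rw [h1]
  apply sum_mul_le_topSum hl r
  · exact fun j => Finset.sum_nonneg (fun i _ => hB0 i j)
  · intro j
    rw [hr, ← hcol j]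
    exact Finset.sum_le_sum_of_subset_of_nonneg (Finset.subset_univ S)
      (fun i _ _ => hB0 i j)
  · rw [hr, Finset.sum_comm]
    rw [Finset.sum_congr rfl (fun i (_ : i ∈ S) => hrow i), Finset.sum_const, ← hcard]
    simp

end DS

section Greedy
variable {m : ℕ}

/-- Partial sums by value index. -/
noncomputable def Wsum (x : Fin m → ℝ) (k : ℕ) : ℝ :=
  ∑ l ∈ univ.filter (fun l : Fin m => (l : ℕ) < k), x l

lemma greedyFill_apply (u : Fin m → ℝ) (k : Fin m) :
    greedyFill u k = min (u k) (max 0 (1 - Wsum u (k : ℕ))) := rfl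

lemma greedyFill_nonneg {w : Fin m → ℝ} (hw0 : ∀ i, 0 ≤ w i) (k : Fin m) :
    0 ≤ greedyFill w k :=
  le_min (hw0 k) (le_max_left 0 _)

lemma Wsum_succ (x : Fin m → ℝ) {k : ℕ} (hk : k < m) :
    Wsum x (k + 1) = Wsum x k + x ⟨k, hk⟩ := by
  unfold Wsum
  have hins : univ.filter (fun l : Fin m => (l : ℕ) < k + 1)
      = insert ⟨k, hk⟩ (univ.filter (fun l : Fin m => (l : ℕ) < k)) := by
    ext l
    simp only [mem_filter, mem_univ, true_and, mem_insert, Fin.ext_iff]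
    omega
  rw [hins, Finset.sum_insert (by simp)]
  ring

lemma Wsum_stable (x : Fin m → ℝ) {k : ℕ} (hk : m ≤ k) :
    Wsum x k = ∑ i, x i := by
  unfold Wsum
  congr 1
  ext l
  simpa using lt_of_lt_of_le l.2 hk

lemma Wsum_mono {x : Fin m → ℝ} (hx0 : ∀ i, 0 ≤ x i) {k k' : ℕ} (h : k ≤ k') :
    Wsum x k ≤ Wsum x k' := by
  apply Finset.sum_le_sum_of_subset_of_nonneg
  · exact Finset.monotone_filter_right _ (fun i _ hi => lt_of_lt_of_le hi h)
  · exact fun i _ _ => hx0 i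

lemma greedyFill_partial {w : Fin m → ℝ} (hw0 : ∀ i, 0 ≤ w i) (k : ℕ) :
    Wsum (greedyFill w) k = min (Wsum w k) 1 := by
  induction k with
  | zero =>
    have h0 : ∀ x : Fin m → ℝ, Wsum x 0 = 0 := by
      intro x; unfold Wsum
      rw [Finset.sum_eq_zero (fun l hl => by simp at hl)]
    rw [h0, h0]
    simp
  | succ k ih =>
    by_cases hk : k < m
    · rw [Wsum_succ _ hk, Wsum_succ _ hk, ih, greedyFill_apply]
      rcases le_or_gt 1 (Wsum w k) with h1 | h1
      · have hmax : max 0 (1 - Wsum w ((⟨k, hk⟩ : Fin m) : ℕ)) = 0 :=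
          max_eq_left (by simpa using sub_nonpos.mpr h1)
        rw [hmax, min_eq_right h1, min_eq_right (hw0 _)]
        have : (1:ℝ) ≤ Wsum w k + w ⟨k, hk⟩ := le_trans h1 (by linarith [hw0 ⟨k, hk⟩])
        rw [min_eq_right this]
        ring
      · have hmax : max 0 (1 - Wsum w ((⟨k, hk⟩ : Fin m) : ℕ)) = 1 - Wsum w k :=
          max_eq_right (by simpa using h1.le)
        rw [hmax, min_eq_left h1.le]
        rcases le_or_gt (w ⟨k, hk⟩) (1 - Wsum w k) with h2 | h2
        · rw [min_eq_left h2, min_eq_left (by linarith)]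
        · rw [min_eq_right h2.le, min_eq_right (by linarith)]
          ring
    · rw [show k + 1 = k + 1 from rfl]
      have e1 : Wsum (greedyFill w) (k+1) = Wsum (greedyFill w) k := by
        rw [Wsum_stable _ (by omega), Wsum_stable _ (by omega)]
      have e2 : Wsum w (k+1) = Wsum w k := by
        rw [Wsum_stable _ (by omega), Wsum_stable _ (by omega)]
      rw [e1, e2, ih]

lemma greedyFill_antitone {w : Fin m → ℝ} (hw : Antitone w) (hw0 : ∀ i, 0 ≤ w i) :
    Antitone (greedyFill w) := by
  intro i j hij
  rw [greedyFill_apply, greedyFill_apply]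
  apply min_le_min (hw hij)
  apply max_le_max le_rfl
  have := Wsum_mono hw0 (show (i:ℕ) ≤ (j:ℕ) from hij)
  linarith

lemma topSum_greedyFill {w : Fin m → ℝ} (hw : Antitone w) (hw0 : ∀ i, 0 ≤ w i) (k : ℕ) :
    topSum (greedyFill w) k = min (Wsum w k) 1 := by
  rw [topSum_of_antitone (greedyFill_antitone hw hw0) (greedyFill_nonneg hw0) k]
  exact greedyFill_partial hw0 k

lemma maj_greedy {t' u' : Fin m → ℝ} (ht0 : ∀ i, 0 ≤ t' i) (hu0 : ∀ i, 0 ≤ u' i)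
    (hcap : ∀ i, t' i ≤ u' i) (hsum : ∑ i, t' i = 1) :
    Maj t' (greedyFill (sortDesc u')) ∧ ∑ i, greedyFill (sortDesc u') i = 1 := by
  have hw : Antitone (sortDesc u') := sortDesc_antitone u'
  have hw0 : ∀ i, 0 ≤ sortDesc u' i := sortDesc_nonneg hu0
  have hWtop : ∀ k, Wsum (sortDesc u') k = topSum u' k := fun k => rfl
  constructor
  · intro k
    rw [topSum_greedyFill hw hw0 k]
    apply le_min
    · rw [hWtop]
      rw [topSum_eq_sum_image t' k]
      calc ∑ i ∈ _, t' i ≤ ∑ i ∈ (univ.filter (fun i : Fin m => (i : ℕ) < k)).image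
            (fun i => (Fin.revPerm.trans (Tuple.sort t')) i), u' i :=
            Finset.sum_le_sum (fun i _ => hcap i)
        _ ≤ topSum u' k := sum_le_topSum hu0 (by
            rw [Finset.card_image_of_injective _ (Fin.revPerm.trans (Tuple.sort t')).injective,
              card_filter_lt_val]
            omega)
    · rw [topSum_eq_sum_image t' k, ← hsum]
      exact Finset.sum_le_sum_of_subset_of_nonneg (Finset.subset_univ _) (fun i _ _ => ht0 i)
  · have h1 : ∑ i, greedyFill (sortDesc u') i = Wsum (greedyFill (sortDesc u')) m :=
      (Wsum_stable _ le_rfl).symm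
    rw [h1, greedyFill_partial hw0 m, Wsum_stable _ le_rfl, sum_sortDesc u']
    apply min_eq_right
    calc (1:ℝ) = ∑ i, t' i := hsum.symm
      _ ≤ ∑ i, u' i := Finset.sum_le_sum (fun i _ => hcap i)

end Greedy

section Pairs
variable {n : ℕ}

lemma offDiag_sum_eq (h : Fin n → Fin n → ℝ) :
    (∑ i, ∑ j, if i ≠ j then h i j else 0)
      = ∑ p ∈ (univ : Finset (Fin n)).offDiag, h p.1 p.2 := by
  classical
  rw [← Finset.sum_product']
  rw [show ((univ : Finset (Fin n)).offDiag)
      = (univ ×ˢ univ).filter (fun p : Fin n × Fin n => p.1 ≠ p.2) by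
    ext p; simp [Finset.mem_offDiag]]
  rw [Finset.sum_filter]

lemma offDiag_partition (f : Fin n × Fin n → ℝ) :
    ∑ p ∈ (univ : Finset (Fin n)).offDiag, f p
      = ∑ s ∈ Finset.powersetCard 2 (univ : Finset (Fin n)), ∑ p ∈ s.offDiag, f p := by
  classical
  rw [← Finset.sum_fiberwise_of_maps_to
    (g := fun p : Fin n × Fin n => ({p.1, p.2} : Finset (Fin n)))
    (fun p hp => by
      rw [Finset.mem_offDiag] at hp
      rw [Finset.mem_powersetCard]
      exact ⟨Finset.subset_univ _, Finset.card_pair hp.2.2⟩) f]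
  apply Finset.sum_congr rfl
  intro s hs
  rw [Finset.mem_powersetCard] at hs
  congr 1
  ext p
  simp only [Finset.mem_filter, Finset.mem_offDiag, Finset.mem_univ, true_and]
  constructor
  · rintro ⟨hne, rfl⟩
    exact ⟨by simp, by simp, hne⟩
  · rintro ⟨h1, h2, hne⟩
    refine ⟨hne, ?_⟩
    apply Finset.eq_of_subset_of_card_le
    · intro x hx
      rcases Finset.mem_insert.mp hx with rfl | hx
      · exact h1
      · rcases Finset.mem_singleton.mp hx with rfl
        exact h2
    · rw [Finset.card_pair hne, hs.2]

lemma offDiag_pair_sum {a b : Fin n} (hab : a ≠ b) (f : Fin n × Fin n → ℝ) :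
    ∑ p ∈ ({a, b} : Finset (Fin n)).offDiag, f p = f (a, b) + f (b, a) := by
  classical
  have hset : ({a, b} : Finset (Fin n)).offDiag = {(a, b), (b, a)} := by
    ext p
    simp only [Finset.mem_offDiag, Finset.mem_insert, Finset.mem_singleton,
      Prod.ext_iff]
    constructor
    · rintro ⟨h1, h2, hne⟩
      rcases h1 with h1 | h1 <;> rcases h2 with h2 | h2 <;> simp_all
    · rintro (⟨h1, h2⟩ | ⟨h1, h2⟩) <;> subst h1 <;> subst h2
      · exact ⟨Or.inl rfl, Or.inr rfl, hab⟩
      · exact ⟨Or.inr rfl, Or.inl rfl, hab.symm⟩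
  rw [hset, Finset.sum_pair (by simp [Prod.ext_iff]; intro h; exact fun h' => hab h)]

lemma sum_pairSubtype (g : Finset (Fin n) → ℝ) :
    ∑ s : {s : Finset (Fin n) // s.card = 2}, g s.1
      = ∑ s ∈ Finset.powersetCard 2 (univ : Finset (Fin n)), g s := by
  classical
  exact (Finset.sum_subtype _ (fun s => Finset.mem_powersetCard_univ) g).symm

end Pairs

section Mat
variable {n : ℕ} {ρ : Matrix (Fin n) (Fin n) ℂ}

lemma psd_re_nonneg (hρ : ρ.PosSemidef) (x : Fin n → ℂ) :
    0 ≤ (star x ⬝ᵥ ρ *ᵥ x).re := by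
  have h := hρ.dotProduct_mulVec_nonneg x
  rw [Complex.le_def] at h
  simpa using h.1

lemma quadform_single (i : Fin n) :
    star (Pi.single i 1 : Fin n → ℂ) ⬝ᵥ ρ *ᵥ (Pi.single i 1) = ρ i i := by
  have h1 : ρ *ᵥ (Pi.single i 1 : Fin n → ℂ) = fun k => ρ k i := by
    funext k
    rw [mulVec_single]
    exact mul_one _
  rw [h1]
  have h2 : star (Pi.single i 1 : Fin n → ℂ) = Pi.single i 1 := by
    funext k
    by_cases hk : k = i
    · subst hk; simp
    · simp [Pi.single_eq_of_ne hk]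
  rw [h2, single_dotProduct, one_mul]

lemma diag_re_nonneg (hρ : ρ.PosSemidef) (i : Fin n) : 0 ≤ (ρ i i).re := by
  have := psd_re_nonneg hρ (Pi.single i 1)
  rwa [quadform_single] at this

lemma diag_im_zero (hρ : ρ.PosSemidef) (i : Fin n) : (ρ i i).im = 0 := by
  have h := congrFun (congrFun hρ.1 i) i
  have : (starRingEnd ℂ) (ρ i i) = ρ i i := by
    simpa [Matrix.conjTranspose_apply] using h
  have := congrArg Complex.im this
  simp at this
  linarith

open scoped MatrixOrder in
lemma offdiag_abs_sq_le (hρ : ρ.PosSemidef) (i j : Fin n) :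
    ‖ρ i j‖ ^ 2 ≤ (ρ i i).re * (ρ j j).re := by
  classical
  set S := CFC.sqrt ρ with hS
  have hSh : S.IsHermitian := (CFC.sqrt_nonneg ρ).posSemidef.1
  have hSS : S * S = ρ := CFC.sqrt_mul_sqrt_self ρ hρ.nonneg
  -- columns of S as elements of EuclideanSpace
  set u : EuclideanSpace ℂ (Fin n) := (WithLp.equiv 2 _).symm (fun k => S k i) with hu
  set v : EuclideanSpace ℂ (Fin n) := (WithLp.equiv 2 _).symm (fun k => S k j) with hv
  have hinner : ∀ a b : Fin n, (inner ℂ ((WithLp.equiv 2 _).symm (fun k => S k a) : EuclideanSpace ℂ (Fin n))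
      ((WithLp.equiv 2 _).symm (fun k => S k b)) : ℂ) = ρ a b := by
    intro a b
    rw [PiLp.inner_apply]
    have : ∀ k, (inner ℂ (((WithLp.equiv 2 _).symm (fun k => S k a) : EuclideanSpace ℂ (Fin n)) k)
        (((WithLp.equiv 2 _).symm (fun k => S k b) : EuclideanSpace ℂ (Fin n)) k) : ℂ)
        = S a k * S k b := by
      intro k
      have hconj : (starRingEnd ℂ) (S k a) = S a k := by
        have := congrFun (congrFun hSh a) k
        simpa [Matrix.conjTranspose_apply] using this
      simp [RCLike.inner_apply, hconj, mul_comm]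
    rw [Finset.sum_congr rfl (fun k _ => this k)]
    have := congrFun (congrFun hSS a) b
    simpa [Matrix.mul_apply] using this
  have hcs := norm_inner_le_norm (𝕜 := ℂ) u v
  have habs : ‖(inner ℂ u v : ℂ)‖ = ‖ρ i j‖ := by
    rw [hinner i j]
  have hnu : ‖u‖ ^ 2 = (ρ i i).re := by
    have := inner_self_eq_norm_sq (𝕜 := ℂ) u
    rw [hinner i i] at this
    simpa using this.symm
  have hnv : ‖v‖ ^ 2 = (ρ j j).re := by
    have := inner_self_eq_norm_sq (𝕜 := ℂ) v
    rw [hinner j j] at this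
    simpa using this.symm
  calc ‖ρ i j‖ ^ 2 = ‖(inner ℂ u v : ℂ)‖ ^ 2 := by rw [habs]
    _ ≤ (‖u‖ * ‖v‖) ^ 2 := by
        apply pow_le_pow_left₀ (norm_nonneg _) hcs
    _ = (ρ i i).re * (ρ j j).re := by rw [mul_pow, hnu, hnv]

end Mat

section Spec
variable {n : ℕ}

lemma conj_diag_re (W : Matrix (Fin n) (Fin n) ℂ) (lam : Fin n → ℝ) (i : Fin n) :
    ((W * diagonal (Complex.ofReal ∘ lam) * Wᴴ) i i).re
      = ∑ k, Complex.normSq (W i k) * lam k := by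
  have h1 : (W * diagonal (Complex.ofReal ∘ lam) * Wᴴ) i i
      = ∑ k, (lam k : ℂ) * ((W i k) * (starRingEnd ℂ) (W i k)) := by
    rw [Matrix.mul_apply]
    apply Finset.sum_congr rfl
    intro k _
    rw [Matrix.mul_diagonal, Matrix.conjTranspose_apply]
    simp only [Function.comp_apply, RCLike.star_def]
    ring
  rw [h1, Complex.re_sum]
  apply Finset.sum_congr rfl
  intro k _
  rw [Complex.mul_conj]
  rw [← Complex.ofReal_mul]
  rw [Complex.ofReal_re]
  ring

lemma unitary_row_sum {W : Matrix (Fin n) (Fin n) ℂ} (h1 : W * Wᴴ = 1) (i : Fin n) :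
    ∑ k, Complex.normSq (W i k) = 1 := by
  have h0 := congrFun (congrFun h1 i) i
  rw [Matrix.mul_apply, Matrix.one_apply_eq] at h0
  have h2 : ∑ k, ((Complex.normSq (W i k) : ℂ)) = 1 := by
    rw [← h0]
    apply Finset.sum_congr rfl
    intro k _
    rw [Matrix.conjTranspose_apply, RCLike.star_def, Complex.mul_conj]
  have := congrArg Complex.re h2
  rw [Complex.re_sum] at this
  simpa using this

lemma unitary_col_sum {W : Matrix (Fin n) (Fin n) ℂ} (h2 : Wᴴ * W = 1) (k : Fin n) :
    ∑ i, Complex.normSq (W i k) = 1 := by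
  have h0 := congrFun (congrFun h2 k) k
  rw [Matrix.mul_apply, Matrix.one_apply_eq] at h0
  have h3 : ∑ i, ((Complex.normSq (W i k) : ℂ)) = 1 := by
    rw [← h0]
    apply Finset.sum_congr rfl
    intro i _
    rw [Matrix.conjTranspose_apply, RCLike.star_def, Complex.normSq_eq_conj_mul_self]
  have := congrArg Complex.re h3
  rw [Complex.re_sum] at this
  simpa using this

lemma maj_conj_diag {lam : Fin n → ℝ} (hlam : ∀ k, 0 ≤ lam k)
    {W : Matrix (Fin n) (Fin n) ℂ} (h1 : W * Wᴴ = 1) (h2 : Wᴴ * W = 1) :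
    Maj (fun i => ((W * diagonal (Complex.ofReal ∘ lam) * Wᴴ) i i).re) lam := by
  apply maj_of_doublyStochastic (B := fun i k => Complex.normSq (W i k))
  · exact fun i k => Complex.normSq_nonneg _
  · exact unitary_row_sum h1
  · exact unitary_col_sum h2
  · exact hlam
  · exact fun i => conj_diag_re W lam i

end Spec

section Inst
variable {n : ℕ} {ρ : Matrix (Fin n) (Fin n) ℂ}

lemma U_mul_star (hH : ρ.IsHermitian) :
    (hH.eigenvectorUnitary : Matrix (Fin n) (Fin n) ℂ)
      * (hH.eigenvectorUnitary : Matrix (Fin n) (Fin n) ℂ)ᴴ = 1 := by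
  rw [← Matrix.star_eq_conjTranspose]
  exact Matrix.mem_unitaryGroup_iff.mp hH.eigenvectorUnitary.2

lemma star_mul_U (hH : ρ.IsHermitian) :
    (hH.eigenvectorUnitary : Matrix (Fin n) (Fin n) ℂ)ᴴ
      * (hH.eigenvectorUnitary : Matrix (Fin n) (Fin n) ℂ) = 1 := by
  rw [← Matrix.star_eq_conjTranspose]
  exact Matrix.mem_unitaryGroup_iff'.mp hH.eigenvectorUnitary.2

lemma spectral' (hH : ρ.IsHermitian) :
    ρ = (hH.eigenvectorUnitary : Matrix (Fin n) (Fin n) ℂ)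
      * diagonal (Complex.ofReal ∘ hH.eigenvalues)
      * (hH.eigenvectorUnitary : Matrix (Fin n) (Fin n) ℂ)ᴴ :=
  hH.spectral_theorem

lemma diag_maj (hρ : ρ.PosSemidef) : Maj (diagVec ρ) hρ.1.eigenvalues := by
  have h := maj_conj_diag (lam := hρ.1.eigenvalues) hρ.eigenvalues_nonneg
    (U_mul_star hρ.1) (star_mul_U hρ.1)
  have hfun : diagVec ρ = fun i =>
      (((hρ.1.eigenvectorUnitary : Matrix (Fin n) (Fin n) ℂ)
        * diagonal (Complex.ofReal ∘ hρ.1.eigenvalues)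
        * (hρ.1.eigenvectorUnitary : Matrix (Fin n) (Fin n) ℂ)ᴴ) i i).re := by
    funext i
    unfold diagVec
    rw [← spectral' hρ.1]
  rw [hfun]
  exact h

lemma trace_conj (U D : Matrix (Fin n) (Fin n) ℂ) (hU : Uᴴ * U = 1) :
    (U * D * Uᴴ).trace = D.trace := by
  rw [Matrix.mul_assoc, Matrix.trace_mul_comm, Matrix.mul_assoc, hU, Matrix.mul_one]

lemma sum_eigen (hρ : ρ.PosSemidef) (htr : ρ.trace = 1) :
    ∑ k, hρ.1.eigenvalues k = 1 := by
  have h1 : ρ.trace = ∑ k, (hρ.1.eigenvalues k : ℂ) := by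
    conv_lhs => rw [spectral' hρ.1]
    rw [trace_conj _ _ (star_mul_U hρ.1), Matrix.trace_diagonal]
    rfl
  rw [htr] at h1
  have := congrArg Complex.re h1.symm
  rw [Complex.re_sum] at this
  simpa using this

lemma sum_sq_eigen (hρ : ρ.PosSemidef) :
    ∑ i, ∑ j, Complex.normSq (ρ i j) = ∑ k, (hρ.1.eigenvalues k) ^ 2 := by
  set U := (hρ.1.eigenvectorUnitary : Matrix (Fin n) (Fin n) ℂ) with hU
  set D := diagonal (Complex.ofReal ∘ hρ.1.eigenvalues) with hD
  have hsq : ρ * ρ = U * (D * D) * Uᴴ := by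
    conv_lhs => rw [spectral' hρ.1]
    simp only [Matrix.mul_assoc]
    rw [← Matrix.mul_assoc Uᴴ U (D * Uᴴ), star_mul_U hρ.1, Matrix.one_mul]
  have h1 : (ρ * ρ).trace = ∑ k, ((hρ.1.eigenvalues k : ℂ)) ^ 2 := by
    rw [hsq, trace_conj _ _ (star_mul_U hρ.1), hD, Matrix.diagonal_mul_diagonal,
      Matrix.trace_diagonal]
    apply Finset.sum_congr rfl
    intro k _
    simp [sq]
  have h2 : (ρ * ρ).trace = ∑ i, ∑ j, ((Complex.normSq (ρ i j) : ℂ)) := by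
    unfold Matrix.trace
    rw [show ∑ i, (ρ * ρ).diag i = ∑ i, ∑ j, ρ i j * ρ j i from
      Finset.sum_congr rfl (fun i _ => by rw [Matrix.diag_apply, Matrix.mul_apply])]
    apply Finset.sum_congr rfl
    intro i _
    apply Finset.sum_congr rfl
    intro j _
    have hconj : ρ j i = (starRingEnd ℂ) (ρ i j) := by
      have := congrFun (congrFun hρ.1 j) i
      rw [Matrix.conjTranspose_apply] at this
      rw [← this]
      rfl
    rw [hconj, Complex.mul_conj]
  have h3 := h1.symm.trans h2
  have := congrArg Complex.re h3
  rw [Complex.re_sum, Complex.re_sum] at this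
  calc ∑ i, ∑ j, Complex.normSq (ρ i j)
      = ∑ i, (∑ j, ((Complex.normSq (ρ i j) : ℂ))).re := by
        apply Finset.sum_congr rfl
        intro i _
        rw [Complex.re_sum]
        exact (Finset.sum_congr rfl (fun j _ => by simp)).symm
    _ = ∑ k, ((hρ.1.eigenvalues k : ℂ) ^ 2).re := this.symm
    _ = ∑ k, (hρ.1.eigenvalues k) ^ 2 :=
        Finset.sum_congr rfl (fun k _ => by rw [← Complex.ofReal_pow, Complex.ofReal_re])

end Inst

section Psi
variable {n : ℕ} {ρ : Matrix (Fin n) (Fin n) ℂ} {ψ : Fin n → (Fin n → ℂ)}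

/-- Matrix whose columns are the measurement vectors. -/
def Qmat (ψ : Fin n → (Fin n → ℂ)) : Matrix (Fin n) (Fin n) ℂ :=
  Matrix.of (fun j i => ψ i j)

lemma Q_star_mul (hψ : IsONB ψ) : (Qmat ψ)ᴴ * (Qmat ψ) = (1 : Matrix (Fin n) (Fin n) ℂ) := by
  ext i i'
  rw [Matrix.mul_apply]
  have h := hψ i i'
  rw [dotProduct] at h
  simp only [Matrix.conjTranspose_apply, Qmat, Matrix.of_apply, Matrix.one_apply]
  simpa [Pi.star_apply] using h

lemma Q_mul_star (hψ : IsONB ψ) : (Qmat ψ) * (Qmat ψ)ᴴ = (1 : Matrix (Fin n) (Fin n) ℂ) :=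
  mul_eq_one_comm.mp (Q_star_mul hψ)

lemma outcome_eq_conj (i : Fin n) :
    outcome ρ ψ i = (((Qmat ψ)ᴴ * ρ * (Qmat ψ)) i i).re := by
  unfold outcome
  congr 1
  calc star (ψ i) ⬝ᵥ (ρ *ᵥ ψ i)
      = ∑ j, ∑ k, (starRingEnd ℂ) (ψ i j) * (ρ j k * ψ i k) := by
        rw [dotProduct]
        apply Finset.sum_congr rfl
        intro j _
        rw [Pi.star_apply, Matrix.mulVec, dotProduct, Finset.mul_sum]
        rfl
    _ = ∑ k, ∑ j, (starRingEnd ℂ) (ψ i j) * (ρ j k * ψ i k) := Finset.sum_comm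
    _ = (((Qmat ψ)ᴴ * ρ * (Qmat ψ)) i i) := by
        rw [Matrix.mul_apply]
        apply Finset.sum_congr rfl
        intro k _
        rw [Matrix.mul_apply, Finset.sum_mul]
        apply Finset.sum_congr rfl
        intro j _
        simp only [Matrix.conjTranspose_apply, Qmat, Matrix.of_apply, Pi.star_apply,
          RCLike.star_def]
        ring

lemma outcome_maj (hρ : ρ.PosSemidef) (hψ : IsONB ψ) :
    Maj (outcome ρ ψ) hρ.1.eigenvalues := by
  set U := (hρ.1.eigenvectorUnitary : Matrix (Fin n) (Fin n) ℂ) with hU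
  set D := diagonal (Complex.ofReal ∘ hρ.1.eigenvalues) with hD
  set W := (Qmat ψ)ᴴ * U with hW
  have hWstar : Wᴴ = Uᴴ * (Qmat ψ) := by
    rw [hW, Matrix.conjTranspose_mul, Matrix.conjTranspose_conjTranspose]
  have h1 : W * Wᴴ = 1 := by
    rw [hW, hWstar, Matrix.mul_assoc, ← Matrix.mul_assoc U Uᴴ (Qmat ψ),
      U_mul_star hρ.1, Matrix.one_mul, Q_star_mul hψ]
  have h2 : Wᴴ * W = 1 := by
    rw [hW, hWstar, Matrix.mul_assoc, ← Matrix.mul_assoc (Qmat ψ) (Qmat ψ)ᴴ U,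
      Q_mul_star hψ, Matrix.one_mul, star_mul_U hρ.1]
  have hfun : outcome ρ ψ = fun i => ((W * D * Wᴴ) i i).re := by
    funext i
    rw [outcome_eq_conj i]
    congr 2
    conv_lhs => rw [spectral' hρ.1]
    rw [hW, hWstar, ← hU, ← hD]
    simp only [Matrix.mul_assoc]
  rw [hfun]
  exact maj_conj_diag hρ.eigenvalues_nonneg h1 h2

lemma sum_diagVec (htr : ρ.trace = 1) : ∑ i, diagVec ρ i = 1 := by
  have : ∑ i, diagVec ρ i = ρ.trace.re := by
    unfold diagVec Matrix.trace
    rw [Complex.re_sum]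
    rfl
  rw [this, htr]
  rfl

lemma sum_outcome (htr : ρ.trace = 1) (hψ : IsONB ψ) : ∑ i, outcome ρ ψ i = 1 := by
  have h1 : ((Qmat ψ)ᴴ * ρ * (Qmat ψ)).trace = ρ.trace := by
    have := trace_conj (Qmat ψ)ᴴ ρ (by
      rw [Matrix.conjTranspose_conjTranspose]; exact Q_mul_star hψ)
    rw [Matrix.conjTranspose_conjTranspose] at this
    exact this
  have h2 : ∑ i, outcome ρ ψ i = (((Qmat ψ)ᴴ * ρ * (Qmat ψ)).trace).re := by
    rw [Finset.sum_congr rfl (fun i _ => outcome_eq_conj (ρ := ρ) i)]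
    unfold Matrix.trace
    rw [Complex.re_sum]
    rfl
  rw [h2, h1, htr]
  rfl

lemma outcome_nonneg (hρ : ρ.PosSemidef) (i : Fin n) : 0 ≤ outcome ρ ψ i :=
  psd_re_nonneg hρ (ψ i)

end Psi

section FEst
variable {n : ℕ}

lemma sortDesc_smul {m : ℕ} {c : ℝ} (hc : 0 ≤ c) (x : Fin m → ℝ) :
    sortDesc (fun i => c * x i) = fun i => c * sortDesc x i := by
  have hmono2 : Monotone ((fun i => c * x i) ∘ Tuple.sort x) := by
    intro a b hab
    exact mul_le_mul_of_nonneg_left (Tuple.monotone_sort x hab) hc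
  have h := Tuple.unique_monotone (Tuple.monotone_sort (fun i => c * x i)) hmono2
  funext i
  exact congrFun h i.rev

lemma sortDescF_smul {ι : Type*} [Fintype ι] {c : ℝ} (hc : 0 ≤ c) (u : ι → ℝ) :
    sortDescF (fun s => c * u s) = fun k => c * sortDescF u k := by
  unfold sortDescF
  have : ((fun s => c * u s) ∘ (Fintype.equivFin ι).symm)
      = fun i => c * (u ∘ (Fintype.equivFin ι).symm) i := rfl
  rw [this, sortDesc_smul hc]

lemma fEst_eq (d : Fin n → ℝ) {C : ℝ} (hC : 0 < C) :
    fEst n C d = Real.sqrt 2 *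
      ∑ k, Real.sqrt (min (sortDescF (fun s : {s : Finset (Fin n) // s.card = 2} =>
          2 * (∏ i ∈ s.1, d i)) k)
        (max 0 (C - Wsum (sortDescF (fun s : {s : Finset (Fin n) // s.card = 2} =>
          2 * (∏ i ∈ s.1, d i))) (k : ℕ)))) := by
  set u0 : {s : Finset (Fin n) // s.card = 2} → ℝ := fun s => 2 * (∏ i ∈ s.1, d i) with hu0
  have hCne : C ≠ 0 := hC.ne'
  have hCinv : (0:ℝ) ≤ C⁻¹ := by positivity
  have hvec : (fun s : {s : Finset (Fin n) // s.card = 2} => 2 * (∏ i ∈ s.1, d i) / C)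
      = fun s => C⁻¹ * u0 s := by
    funext s
    rw [hu0]
    field_simp
  unfold fEst
  rw [hvec, sortDescF_smul hCinv]
  set w0 := sortDescF u0 with hw0
  have hgf : ∀ k, greedyFill (fun k => C⁻¹ * w0 k) k
      = C⁻¹ * min (w0 k) (max 0 (C - Wsum w0 (k : ℕ))) := by
    intro k
    rw [greedyFill_apply]
    have hW : Wsum (fun k => C⁻¹ * w0 k) (k : ℕ) = C⁻¹ * Wsum w0 (k : ℕ) := by
      unfold Wsum
      rw [Finset.mul_sum]
    rw [hW]
    rw [show (1 : ℝ) - C⁻¹ * Wsum w0 (k : ℕ) = C⁻¹ * (C - Wsum w0 (k : ℕ)) by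
      field_simp]
    rw [mul_min_of_nonneg _ _ hCinv, mul_max_of_nonneg _ _ hCinv, mul_zero]
  rw [Finset.sum_congr rfl (fun k _ => by rw [hgf k])]
  rw [Finset.mul_sum, Finset.mul_sum]
  apply Finset.sum_congr rfl
  intro k _
  rw [Real.sqrt_mul (by positivity : (0:ℝ) ≤ C⁻¹),
    ← mul_assoc, ← Real.sqrt_mul (by positivity : (0:ℝ) ≤ 2 * C)]
  congr 2
  field_simp

lemma fEst_mono (d : Fin n → ℝ) {C C' : ℝ} (hC : 0 < C) (hCC' : C ≤ C') :
    fEst n C d ≤ fEst n C' d := by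
  have hC' : 0 < C' := lt_of_lt_of_le hC hCC'
  rw [fEst_eq d hC, fEst_eq d hC']
  apply mul_le_mul_of_nonneg_left _ (Real.sqrt_nonneg 2)
  apply Finset.sum_le_sum
  intro k _
  apply Real.sqrt_le_sqrt
  apply min_le_min le_rfl
  apply max_le_max le_rfl
  linarith

end FEst

section Part1
variable {n : ℕ} {ρ : Matrix (Fin n) (Fin n) ℂ}

lemma Cl1_nonneg : 0 ≤ Cl1 ρ := by
  apply Finset.sum_nonneg
  intro i _
  apply Finset.sum_nonneg
  intro j _
  split
  · positivity
  · exact le_refl _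

lemma Cl2_nonneg : 0 ≤ Cl2 ρ := by
  apply Finset.sum_nonneg
  intro i _
  apply Finset.sum_nonneg
  intro j _
  split
  · positivity
  · exact le_refl _

lemma Cl2_offDiag : Cl2 ρ
    = ∑ p ∈ (univ : Finset (Fin n)).offDiag, ‖ρ p.1 p.2‖ ^ 2 :=
  offDiag_sum_eq (fun i j => ‖ρ i j‖ ^ 2)

lemma Cl1_offDiag : Cl1 ρ
    = ∑ p ∈ (univ : Finset (Fin n)).offDiag, ‖ρ p.1 p.2‖ :=
  offDiag_sum_eq (fun i j => ‖ρ i j‖)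

lemma part1 (hρ : ρ.PosSemidef) : fEst n (Cl2 ρ) (diagVec ρ) ≤ Cl1 ρ := by
  classical
  have hd0 : ∀ i, 0 ≤ diagVec ρ i := diag_re_nonneg hρ
  rcases eq_or_lt_of_le (Cl2_nonneg (ρ := ρ)) with hC0 | hC
  · have hzero : ∀ p ∈ (univ : Finset (Fin n)).offDiag, ‖ρ p.1 p.2‖ = 0 := by
      intro p hp
      have h := (Finset.sum_eq_zero_iff_of_nonneg
        (fun p (_ : p ∈ (univ : Finset (Fin n)).offDiag) =>
          by positivity : ∀ p ∈ (univ : Finset (Fin n)).offDiag,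
            (0:ℝ) ≤ ‖ρ p.1 p.2‖ ^ 2)).mp
        (by rw [← Cl2_offDiag]; exact hC0.symm) p hp
      exact pow_eq_zero_iff two_ne_zero |>.mp h
    have hCl1 : Cl1 ρ = 0 := by
      rw [Cl1_offDiag]; exact Finset.sum_eq_zero hzero
    have hfE : fEst n (Cl2 ρ) (diagVec ρ) = 0 := by
      unfold fEst
      rw [← hC0]
      norm_num
    rw [hfE, hCl1]
  · set C := Cl2 ρ with hCdef
    set t : {s : Finset (Fin n) // s.card = 2} → ℝ :=
      fun s => (∑ p ∈ s.1.offDiag, ‖ρ p.1 p.2‖ ^ 2) / C with ht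
    have hsymm : ∀ a b : Fin n, ‖ρ b a‖ = ‖ρ a b‖ := by
      intro a b
      have h := congrFun (congrFun hρ.1 b) a
      rw [Matrix.conjTranspose_apply] at h
      rw [← h, RCLike.star_def, Complex.norm_conj]
    have hts : ∀ s : {s : Finset (Fin n) // s.card = 2},
        ∃ a b, a ≠ b ∧ s.1 = {a, b} := fun s => by
      obtain ⟨a, b, hab, h⟩ := Finset.card_eq_two.mp s.2
      exact ⟨a, b, hab, h⟩
    have ht0 : ∀ s, 0 ≤ t s := by
      intro s
      apply div_nonneg _ hC.le
      apply Finset.sum_nonneg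
      intro p _
      positivity
    have hu0 : ∀ s : {s : Finset (Fin n) // s.card = 2},
        0 ≤ 2 * (∏ i ∈ s.1, diagVec ρ i) / C := by
      intro s
      apply div_nonneg _ hC.le
      have := Finset.prod_nonneg (fun i (_ : i ∈ s.1) => hd0 i)
      linarith
    have htu : ∀ s, t s ≤ 2 * (∏ i ∈ s.1, diagVec ρ i) / C := by
      intro s
      obtain ⟨a, b, hab, hs⟩ := hts s
      rw [ht]
      simp only [hs]
      rw [offDiag_pair_sum hab (fun p => ‖ρ p.1 p.2‖ ^ 2),
        Finset.prod_pair hab]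
      dsimp only
      apply (div_le_div_iff_of_pos_right hC).mpr
      rw [hsymm a b]
      have hcs := offdiag_abs_sq_le hρ a b
      unfold diagVec
      nlinarith
    have htsum : ∑ s, t s = 1 := by
      rw [ht, ← Finset.sum_div,
        sum_pairSubtype (fun S => ∑ p ∈ S.offDiag, ‖ρ p.1 p.2‖ ^ 2),
        ← offDiag_partition, ← Cl2_offDiag, ← hCdef, div_self hC.ne']
    have hCl1 : Cl1 ρ = Real.sqrt (2 * C) * ∑ s, Real.sqrt (t s) := by
      rw [Cl1_offDiag, offDiag_partition,
        ← sum_pairSubtype (fun S => ∑ p ∈ S.offDiag, ‖ρ p.1 p.2‖),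
        Finset.mul_sum]
      apply Finset.sum_congr rfl
      intro s _
      obtain ⟨a, b, hab, hs⟩ := hts s
      have htv : t s = 2 * ‖ρ a b‖ ^ 2 / C := by
        rw [ht]
        simp only [hs]
        rw [offDiag_pair_sum hab (fun p => ‖ρ p.1 p.2‖ ^ 2)]
        dsimp only
        rw [hsymm a b]
        ring_nf
      rw [hs, offDiag_pair_sum hab (fun p => ‖ρ p.1 p.2‖), htv]
      dsimp only
      rw [← Real.sqrt_mul (by positivity : (0:ℝ) ≤ 2 * C)]
      rw [show 2 * C * (2 * ‖ρ a b‖ ^ 2 / C) = (2 * ‖ρ a b‖) ^ 2 by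
        field_simp]
      rw [Real.sqrt_sq (by positivity)]
      simp only [hsymm a b]
      ring
    -- majorization step
    set m := Fintype.card {s : Finset (Fin n) // s.card = 2} with hm
    set eq := Fintype.equivFin {s : Finset (Fin n) // s.card = 2} with heq
    set t' : Fin m → ℝ := t ∘ eq.symm with ht'
    set u' : Fin m → ℝ := (fun s => 2 * (∏ i ∈ s.1, diagVec ρ i) / C) ∘ eq.symm with hu'
    have hsort : sortDesc u' = sortDescF
        (fun s : {s : Finset (Fin n) // s.card = 2} =>
          2 * (∏ i ∈ s.1, diagVec ρ i) / C) := rfl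
    have ht'sum : ∑ k, t' k = 1 := by
      rw [ht', show ∑ k, (t ∘ eq.symm) k = ∑ s, t s from Equiv.sum_comp eq.symm t, htsum]
    have hmg := maj_greedy (t' := t') (u' := u') (fun k => ht0 _) (fun k => hu0 _)
      (fun k => htu _) ht'sum
    have hgf0 : ∀ k, 0 ≤ greedyFill (sortDesc u') k :=
      greedyFill_nonneg (sortDesc_nonneg (fun k => hu0 (eq.symm k)))
    have hsq := maj_sum_sqrt_le (fun k => ht0 _) hgf0 hmg.1 (ht'sum.trans hmg.2.symm)
    have hsum2 : ∑ k, Real.sqrt (t' k) = ∑ s, Real.sqrt (t s) :=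
      Equiv.sum_comp eq.symm (fun s => Real.sqrt (t s))
    calc fEst n C (diagVec ρ)
        = Real.sqrt (2 * C) * ∑ k, Real.sqrt (greedyFill (sortDesc u') k) := by
          unfold fEst
          rw [hsort]
      _ ≤ Real.sqrt (2 * C) * ∑ s, Real.sqrt (t s) := by
          apply mul_le_mul_of_nonneg_left _ (Real.sqrt_nonneg _)
          rw [← hsum2]
          exact hsq
      _ = Cl1 ρ := hCl1.symm

end Part1


/-- `C_{l₁}(ρ) ≥ f(C_{l₂}(ρ), d)`, `f(·, d)` is nondecreasing in its
first argument, and consequently `C_{l₁}(ρ) ≥ f(S_L(d) − S_L(d∨p), d)` for the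
outcome distribution `p` of any von Neumann measurement on `ρ`. -/
theorem stmt15 {n : ℕ} (ρ : Matrix (Fin n) (Fin n) ℂ)
    (hρ : ρ.PosSemidef) (htr : ρ.trace = 1)
    (ψ : Fin n → (Fin n → ℂ)) (hψ : IsONB ψ)
    (c : Fin n → ℝ) (hc : IsMajJoin (diagVec ρ) (outcome ρ ψ) c) :
    fEst n (Cl2 ρ) (diagVec ρ) ≤ Cl1 ρ ∧
    (∀ C C' : ℝ, 0 < C → C ≤ C' → fEst n C (diagVec ρ) ≤ fEst n C' (diagVec ρ)) ∧
    fEst n (linEnt (diagVec ρ) - linEnt c) (diagVec ρ) ≤ Cl1 ρ := by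
  refine ⟨part1 hρ, fun C C' hC hCC' => fEst_mono _ hC hCC', ?_⟩
  set lam := hρ.1.eigenvalues with hlam
  have hlprob : IsProbVec lam := ⟨hρ.eigenvalues_nonneg, sum_eigen hρ htr⟩
  have hclam : Maj c lam := hc.2.2.2 lam hlprob (diag_maj hρ) (outcome_maj hρ hψ)
  have hcsum : ∑ i, c i = ∑ i, lam i := by rw [hc.1.2, hlprob.2]
  have hsq := maj_sum_sq_le hclam hcsum
  have hsplit : ∑ k, lam k ^ 2 = (∑ i, diagVec ρ i ^ 2) + Cl2 ρ := by
    rw [hlam, ← sum_sq_eigen hρ]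
    have hdecomp : ∀ i : Fin n, ∑ j, Complex.normSq (ρ i j)
        = Complex.normSq (ρ i i)
          + ∑ j, (if i ≠ j then ‖ρ i j‖ ^ 2 else 0) := by
      intro i
      have h1 : ∀ j, Complex.normSq (ρ i j)
          = (if i = j then Complex.normSq (ρ i j) else 0)
            + (if i ≠ j then ‖ρ i j‖ ^ 2 else 0) := by
        intro j
        by_cases h : i = j <;> simp [h, Complex.sq_norm]
      rw [Finset.sum_congr rfl (fun j _ => h1 j), Finset.sum_add_distrib]
      congr 1
      rw [Finset.sum_ite_eq]
      simp
    rw [Finset.sum_congr rfl (fun i _ => hdecomp i), Finset.sum_add_distrib]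
    congr 1
    apply Finset.sum_congr rfl
    intro i _
    rw [Complex.normSq_apply, diag_im_zero hρ i]
    unfold diagVec
    ring
  have hC3 : linEnt (diagVec ρ) - linEnt c ≤ Cl2 ρ := by
    unfold linEnt
    have h2 : ∑ i, c i ^ 2 ≤ (∑ i, diagVec ρ i ^ 2) + Cl2 ρ := by
      rw [← hsplit]; exact hsq
    linarith
  rcases le_or_gt (linEnt (diagVec ρ) - linEnt c) 0 with h0 | h0
  · have hz : fEst n (linEnt (diagVec ρ) - linEnt c) (diagVec ρ) = 0 := by
      unfold fEst
      rw [show Real.sqrt (2 * (linEnt (diagVec ρ) - linEnt c)) = 0 from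
        Real.sqrt_eq_zero'.mpr (by linarith), zero_mul]
    rw [hz]
    exact Cl1_nonneg
  · exact le_trans (fEst_mono _ h0 hC3) (part1 hρ)
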